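/- For any real t₀, the radius of convergence of the Taylor series of 1/cosh centered at t₀ equals √(t₀² + π²/4); in particular it is finite for every real t₀. -/

import Mathlib

/-!
`1 / cosh` is holomorphic away from the zeros `(2k + 1)πi/2` of `cosh`, the nearest of which to
`t₀` are `±πi/2`, at distance `√(t₀² + π²/4)`. Cauchy's integral formula on smaller and smaller
discs yields a single power series converging on the whole open disc of that radius. The radius
cannot be larger: the sum would then be continuous at `πi/2`, while `cosh · (sum) = 1` on the disc
and `cosh (πi/2) = 0`.
-/

open Complex Metric
open scoped ENNReal NNReal

theorem Complex.re_eq_zero_and_pi_div_two_le_abs_im_of_cosh_eq_zero {z : ℂ} (hz : cosh z = 0) :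
    z.re = 0 ∧ Real.pi / 2 ≤ |z.im| := by
  rw [← cos_mul_I, cos_eq_zero_iff] at hz
  obtain ⟨k, hk⟩ := hz
  have hz : z = -((2 * k + 1) * Real.pi / 2 : ℝ) * I := by
    have := congrArg (· * I) hk
    simp only [mul_assoc, I_mul_I] at this
    push_cast; linear_combination -this
  have hodd : (1 : ℝ) ≤ |2 * (k : ℝ) + 1| := by
    have : (1 : ℤ) ≤ |2 * k + 1| := Int.one_le_abs (by omega)
    exact_mod_cast this
  rw [hz]
  simp only [neg_mul, neg_re, mul_re, ofReal_re, I_re, mul_zero, ofReal_im, I_im, sub_self,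
    neg_zero, neg_im, mul_im, mul_one, add_zero, abs_neg, true_and]
  rw [abs_div, abs_mul, abs_of_pos Real.pi_pos, abs_two]
  nlinarith [Real.pi_pos]

theorem Complex.sqrt_le_dist_of_cosh_eq_zero (t₀ : ℝ) {z : ℂ} (hz : cosh z = 0) :
    Real.sqrt (t₀ ^ 2 + Real.pi ^ 2 / 4) ≤ dist z t₀ := by
  obtain ⟨hre, him⟩ := re_eq_zero_and_pi_div_two_le_abs_im_of_cosh_eq_zero hz
  rw [dist_eq, norm_def, normSq_apply]
  apply Real.sqrt_le_sqrt
  simp only [sub_re, ofReal_re, hre, sub_im, ofReal_im, sub_zero]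
  nlinarith [sq_abs z.im, abs_nonneg z.im, Real.pi_pos]

theorem Complex.cosh_pi_div_two_mul_I : cosh ((Real.pi / 2 : ℝ) * I) = 0 := by
  rw [cosh_mul_I]; exact_mod_cast cos_pi_div_two

theorem Complex.dist_pi_div_two_mul_I (t₀ : ℝ) :
    dist ((Real.pi / 2 : ℝ) * I) t₀ = Real.sqrt (t₀ ^ 2 + Real.pi ^ 2 / 4) := by
  rw [dist_eq, norm_def, normSq_apply]
  congr 1
  simp only [sub_re, sub_im, mul_re, mul_im, ofReal_re, ofReal_im, I_re, I_im]
  ring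

theorem HasFPowerSeriesOnBall.of_forall_lt {𝕜 E F : Type*} [NontriviallyNormedField 𝕜]
    [NormedAddCommGroup E] [NormedSpace 𝕜 E] [NormedAddCommGroup F] [NormedSpace 𝕜 F]
    {f : E → F} {p : FormalMultilinearSeries 𝕜 E F} {x : E} {r : ℝ≥0∞} (hr : 0 < r)
    (h : ∀ r' : ℝ≥0, 0 < r' → (r' : ℝ≥0∞) < r → HasFPowerSeriesOnBall f p x r') :
    HasFPowerSeriesOnBall f p x r where
  r_le := ENNReal.le_of_forall_pos_nnreal_lt fun r' hr' hr'r => (h r' hr' hr'r).r_le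
  r_pos := hr
  hasSum {y} hy := by
    obtain ⟨r', hyr', hr'r⟩ := ENNReal.lt_iff_exists_nnreal_btwn.1 (mem_eball_zero_iff.1 hy)
    exact (h r' (ENNReal.coe_pos.1 (pos_of_gt hyr')) hr'r).hasSum (mem_eball_zero_iff.2 hyr')

theorem DifferentiableOn.exists_hasFPowerSeriesOnBall {E : Type*} [NormedAddCommGroup E]
    [NormedSpace ℂ E] [CompleteSpace E] {f : ℂ → E} {c : ℂ} {r : ℝ≥0∞}
    (hd : DifferentiableOn ℂ f (eball c r)) (hr : 0 < r) :
    ∃ p : FormalMultilinearSeries ℂ ℂ E, HasFPowerSeriesOnBall f p c r := by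
  have hcauchy : ∀ r' : ℝ≥0, 0 < r' → (r' : ℝ≥0∞) < r →
      HasFPowerSeriesOnBall f (cauchyPowerSeries f c r') c r' := fun r' hr' hr'r =>
    (hd.mono fun w hw => (edist_le_coe.2 hw).trans_lt hr'r).hasFPowerSeriesOnBall hr'
  obtain ⟨R, hR, hRr⟩ := ENNReal.lt_iff_exists_nnreal_btwn.1 hr
  -- by uniqueness of expansions, the Cauchy series of all radii `R < r` are the same
  refine ⟨cauchyPowerSeries f c R, .of_forall_lt hr fun r' hr' hr'r => ?_⟩
  exact (hcauchy R (ENNReal.coe_pos.1 hR) hRr).exchange_radius (hcauchy r' hr' hr'r)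

theorem HasFPowerSeriesOnBall.radius_le_edist_of_mul_eq_one {𝕜 : Type*}
    [NontriviallyNormedField 𝕜] [CompleteSpace 𝕜] {f g : 𝕜 → 𝕜}
    {p : FormalMultilinearSeries 𝕜 𝕜 𝕜} {c z : 𝕜} {r : ℝ≥0∞}
    (hf : HasFPowerSeriesOnBall f p c r) (hfg : ∀ w ∈ eball c r, g w * f w = 1)
    (hg : ContinuousAt g z) (hgz : g z = 0) (hz : z ∈ closure (eball c r)) :
    p.radius ≤ edist z c := by
  by_contra! hlt
  set F : 𝕜 → 𝕜 := fun w => p.sum (w - c)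
  have hF : ContinuousAt F z :=
    (p.continuousOn.continuousAt (isOpen_eball.mem_nhds (by
      rwa [mem_eball, edist_zero_right, ← edist_eq_enorm_sub]))).comp
      (continuous_sub_right c).continuousAt
  have hfF : ∀ w ∈ eball c r, f w = F w := fun w hw => by
    simpa using hf.sum (y := w - c) (by rwa [mem_eball, edist_zero_right, ← edist_eq_enorm_sub])
  have hgF : g z * F z ∈ closure ((fun w => g w * F w) '' eball c r) :=
    mem_closure_image (hg.mul hF) hz
  have himage : (fun w => g w * F w) '' eball c r ⊆ {1} := by
    rintro _ ⟨w, hw, rfl⟩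
    simpa [← hfF w hw] using hfg w hw
  have := closure_mono himage hgF
  rw [closure_singleton, hgz, zero_mul] at this
  exact zero_ne_one this

theorem stmt_6 (t₀ : ℝ) :
    ∃ p : FormalMultilinearSeries ℂ ℂ ℂ,
      HasFPowerSeriesOnBall (fun z : ℂ => (Complex.cosh z)⁻¹) p (t₀ : ℂ)
        (ENNReal.ofReal (Real.sqrt (t₀ ^ 2 + Real.pi ^ 2 / 4))) ∧
      p.radius = ENNReal.ofReal (Real.sqrt (t₀ ^ 2 + Real.pi ^ 2 / 4)) ∧
      p.radius < ⊤ := by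
  set ρ := Real.sqrt (t₀ ^ 2 + Real.pi ^ 2 / 4)
  have hρ : 0 < ρ := Real.sqrt_pos.2 (by positivity)
  have hcosh : ∀ z ∈ eball (t₀ : ℂ) (.ofReal ρ), cosh z ≠ 0 := by
    rw [eball_ofReal]
    exact fun z hz h0 => (mem_ball.1 hz).not_ge (sqrt_le_dist_of_cosh_eq_zero t₀ h0)
  obtain ⟨p, hp⟩ : ∃ p : FormalMultilinearSeries ℂ ℂ ℂ,
      HasFPowerSeriesOnBall (fun z : ℂ => (cosh z)⁻¹) p t₀ (.ofReal ρ) :=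
    DifferentiableOn.exists_hasFPowerSeriesOnBall
      (fun z hz => ((differentiable_cosh z).inv (hcosh z hz)).differentiableWithinAt)
      (ENNReal.ofReal_pos.2 hρ)
  have hradius : p.radius = .ofReal ρ := by
    refine le_antisymm ?_ hp.r_le
    have hzero : dist ((Real.pi / 2 : ℝ) * I) t₀ = ρ := dist_pi_div_two_mul_I t₀
    rw [← hzero, ← edist_dist]
    refine hp.radius_le_edist_of_mul_eq_one (fun z hz => mul_inv_cancel₀ (hcosh z hz))
      continuous_cosh.continuousAt cosh_pi_div_two_mul_I ?_
    rw [eball_ofReal, closure_ball _ hρ.ne']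
    exact mem_closedBall.2 hzero.le
  exact ⟨p, hp, hradius, hradius ▸ ENNReal.ofReal_lt_top⟩
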